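/- (Variance bound) With the hypotheses of the 2-design average-error theorem, the variance of the random variable f(ψ) = ⟨ψ|U₀^r O (U₀†)^r|ψ⟩ - ⟨ψ|U^r O (U†)^r|ψ⟩ under μ₂ is at most 2 r² ‖O‖₂² ‖M‖₂² / (d(d+1)). -/

import Mathlib

open Matrix MeasureTheory

/-- The quadratic form `⟨ψ|A|ψ⟩ = ∑ᵢⱼ conj(ψᵢ) Aᵢⱼ ψⱼ`. -/
noncomputable def qform {d : ℕ} (A : Matrix (Fin d) (Fin d) ℂ)
    (ψ : EuclideanSpace ℂ (Fin d)) : ℂ :=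
  ∑ i, ∑ j, (starRingEnd ℂ) (ψ i) * A i j * ψ j

/-- Schatten 2-norm (Frobenius norm) of a square complex matrix. -/
noncomputable def schatten2 {d : ℕ} (A : Matrix (Fin d) (Fin d) ℂ) : ℝ :=
  Real.sqrt ((A * Aᴴ).trace.re)

set_option linter.unusedSectionVars false
set_option linter.unusedVariables false



noncomputable def FF {d : ℕ} (A : Matrix (Fin d) (Fin d) ℂ) : ℝ := ∑ i, ∑ j, ‖A i j‖^2

lemma FF_nonneg {d : ℕ} (A : Matrix (Fin d) (Fin d) ℂ) : 0 ≤ FF A :=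
  Finset.sum_nonneg fun i _ => Finset.sum_nonneg fun j _ => sq_nonneg _

lemma trace_re_eq_FF {d : ℕ} (A : Matrix (Fin d) (Fin d) ℂ) : (A * Aᴴ).trace.re = FF A := by
  simp only [Matrix.trace, Matrix.diag, Matrix.mul_apply, Matrix.conjTranspose_apply, FF]
  rw [Complex.re_sum]
  refine Finset.sum_congr rfl fun i _ => ?_
  rw [Complex.re_sum]
  refine Finset.sum_congr rfl fun j _ => ?_
  rw [show star (A i j) = (starRingEnd ℂ) (A i j) from rfl, Complex.mul_conj]
  simp [Complex.normSq_eq_norm_sq, ← Complex.ofReal_pow]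

lemma schatten2_sq {d : ℕ} (A : Matrix (Fin d) (Fin d) ℂ) : schatten2 A ^ 2 = FF A := by
  rw [schatten2, Real.sq_sqrt]
  · exact trace_re_eq_FF A
  · rw [trace_re_eq_FF]; exact FF_nonneg A

attribute [local instance] Matrix.frobeniusNormedAddCommGroup

lemma norm_eq_sqrt_FF {d : ℕ} (A : Matrix (Fin d) (Fin d) ℂ) : ‖A‖ = Real.sqrt (FF A) := by
  rw [Matrix.frobenius_norm_def, FF, Real.sqrt_eq_rpow]
  norm_num



lemma FF_mul_unitary_right {d : ℕ} (A V : Matrix (Fin d) (Fin d) ℂ) (hV : V * Vᴴ = 1) :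
    FF (A * V) = FF A := by
  rw [← trace_re_eq_FF, ← trace_re_eq_FF, Matrix.conjTranspose_mul,
    show A * V * (Vᴴ * Aᴴ) = A * (V * Vᴴ) * Aᴴ by noncomm_ring, hV, Matrix.mul_one]

lemma FF_mul_unitary_left {d : ℕ} (A V : Matrix (Fin d) (Fin d) ℂ) (hV : Vᴴ * V = 1) :
    FF (V * A) = FF A := by
  rw [← trace_re_eq_FF, ← trace_re_eq_FF, Matrix.conjTranspose_mul]
  congr 1
  rw [show V * A * (Aᴴ * Vᴴ) = V * (A * Aᴴ) * Vᴴ by noncomm_ring, Matrix.trace_mul_cycle,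
    show Vᴴ * V * (A * Aᴴ) = (Vᴴ * V) * (A * Aᴴ) by noncomm_ring, hV, Matrix.one_mul]

-- Böttcher–Wenzel core for a real-diagonal matrix
lemma bw_diag {d : ℕ} (l : Fin d → ℝ) (Y : Matrix (Fin d) (Fin d) ℂ) :
    FF (Matrix.diagonal (Complex.ofReal ∘ l) * Y - Y * Matrix.diagonal (Complex.ofReal ∘ l))
      ≤ 2 * (∑ m, l m ^ 2) * FF Y := by
  rw [FF, FF, Finset.mul_sum]
  refine Finset.sum_le_sum fun i _ => ?_
  rw [Finset.mul_sum]
  refine Finset.sum_le_sum fun j _ => ?_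
  rw [Matrix.sub_apply, Matrix.diagonal_mul, Matrix.mul_diagonal]
  simp only [Function.comp]
  rw [show (l i : ℂ) * Y i j - Y i j * (l j : ℂ) = ((l i - l j : ℝ) : ℂ) * Y i j by push_cast; ring]
  rw [norm_mul, mul_pow, Complex.norm_real, Real.norm_eq_abs, sq_abs]
  rcases eq_or_ne i j with h | h
  · subst h; simp
    positivity
  · have h1 : (l i - l j) ^ 2 ≤ 2 * (l i ^ 2 + l j ^ 2) := by nlinarith [sq_nonneg (l i + l j)]
    have h2 : l i ^ 2 + l j ^ 2 ≤ ∑ m, l m ^ 2 := by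
      have hp := Finset.sum_pair (f := fun m => l m ^ 2) h
      rw [← hp]
      exact Finset.sum_le_sum_of_subset_of_nonneg (Finset.subset_univ _)
        (fun k _ _ => sq_nonneg _)
    have := sq_nonneg ‖Y i j‖
    nlinarith

lemma bw_hermitian {d : ℕ} (O X : Matrix (Fin d) (Fin d) ℂ) (hO : O.IsHermitian) :
    FF (O * X - X * O) ≤ 2 * FF O * FF X := by
  set l := hO.eigenvalues with hl
  set D : Matrix (Fin d) (Fin d) ℂ := Matrix.diagonal (Complex.ofReal ∘ l) with hD
  set V : Matrix (Fin d) (Fin d) ℂ := (hO.eigenvectorUnitary : Matrix (Fin d) (Fin d) ℂ) with hVdef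
  have hVmem : V ∈ unitary (Matrix (Fin d) (Fin d) ℂ) := (hO.eigenvectorUnitary).2
  have hV1 : Vᴴ * V = 1 := by
    have := hVmem.1; rwa [Matrix.star_eq_conjTranspose] at this
  have hV2 : V * Vᴴ = 1 := by
    have := hVmem.2; rwa [Matrix.star_eq_conjTranspose] at this
  have hspec : O = V * D * Vᴴ := by
    have := hO.spectral_theorem
    rwa [Unitary.conjStarAlgAut_apply, Matrix.star_eq_conjTranspose] at this
  set Y : Matrix (Fin d) (Fin d) ℂ := Vᴴ * X * V with hY
  have hcomm : O * X - X * O = V * (D * Y - Y * D) * Vᴴ := by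
    rw [hspec, hY]
    have e1 : V * (D * (Vᴴ * X * V) - Vᴴ * X * V * D) * Vᴴ
        = V * D * Vᴴ * X * (V * Vᴴ) - (V * Vᴴ) * X * (V * D * Vᴴ) := by noncomm_ring
    rw [e1, hV2, Matrix.mul_one, Matrix.one_mul]
  have hFFY : FF Y = FF X := by
    rw [hY, FF_mul_unitary_right _ _ hV2, FF_mul_unitary_left _ _ (by
      rw [Matrix.conjTranspose_conjTranspose]; exact hV2)]
  have hFFO : FF O = ∑ m, l m ^ 2 := by
    rw [hspec, FF_mul_unitary_right _ _ (by rw [Matrix.conjTranspose_conjTranspose]; exact hV1),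
      FF_mul_unitary_left _ _ hV1, FF]
    rw [Finset.sum_comm]
    refine Finset.sum_congr rfl fun m _ => ?_
    rw [Finset.sum_eq_single m]
    · simp [hD, Matrix.diagonal_apply_eq, ← Complex.ofReal_pow]
    · intro b _ hb
      simp [hD, Matrix.diagonal_apply_ne _ hb]
    · simp
  rw [hcomm, FF_mul_unitary_right _ _ (by rw [Matrix.conjTranspose_conjTranspose]; exact hV1),
    FF_mul_unitary_left _ _ hV1, hFFO, ← hFFY]
  exact bw_diag l Y



lemma FF_eq_sq_norm {d : ℕ} (A : Matrix (Fin d) (Fin d) ℂ) : FF A = ‖A‖ ^ 2 := by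
  rw [norm_eq_sqrt_FF, Real.sq_sqrt (FF_nonneg A)]

lemma norm_mul_unitary_left {d : ℕ} (A V : Matrix (Fin d) (Fin d) ℂ) (hV : Vᴴ * V = 1) :
    ‖V * A‖ = ‖A‖ := by
  rw [norm_eq_sqrt_FF, norm_eq_sqrt_FF, FF_mul_unitary_left _ _ hV]

lemma norm_mul_unitary_right {d : ℕ} (A V : Matrix (Fin d) (Fin d) ℂ) (hV : V * Vᴴ = 1) :
    ‖A * V‖ = ‖A‖ := by
  rw [norm_eq_sqrt_FF, norm_eq_sqrt_FF, FF_mul_unitary_right _ _ hV]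

lemma ct_pow_mul_pow {d : ℕ} (U : Matrix (Fin d) (Fin d) ℂ) (h : Uᴴ * U = 1) (n : ℕ) :
    (U ^ n)ᴴ * U ^ n = 1 := by
  rw [Matrix.conjTranspose_pow]
  induction n with
  | zero => simp
  | succ m ihm =>
    rw [pow_succ, pow_succ', show Uᴴ ^ m * Uᴴ * (U * U ^ m) = Uᴴ ^ m * (Uᴴ * U) * U ^ m by
      noncomm_ring, h, Matrix.mul_one, ihm]

lemma pow_sub_pow_norm_le {d : ℕ} (U U₀ : Matrix (Fin d) (Fin d) ℂ)
    (hU : U * Uᴴ = 1 ∧ Uᴴ * U = 1) (hU₀ : U₀ * U₀ᴴ = 1 ∧ U₀ᴴ * U₀ = 1) (n : ℕ) :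
    ‖U ^ n - U₀ ^ n‖ ≤ n * ‖U - U₀‖ := by
  induction n with
  | zero => simp
  | succ n ih =>
    have hUn : (U ^ n)ᴴ * U ^ n = 1 := ct_pow_mul_pow U hU.2 n
    have key : U ^ (n+1) - U₀ ^ (n+1) = U ^ n * (U - U₀) + (U ^ n - U₀ ^ n) * U₀ := by
      rw [pow_succ, pow_succ]; noncomm_ring
    rw [key]
    calc ‖U ^ n * (U - U₀) + (U ^ n - U₀ ^ n) * U₀‖
        ≤ ‖U ^ n * (U - U₀)‖ + ‖(U ^ n - U₀ ^ n) * U₀‖ := norm_add_le _ _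
      _ = ‖U - U₀‖ + ‖U ^ n - U₀ ^ n‖ := by
          rw [norm_mul_unitary_left _ _ hUn, norm_mul_unitary_right _ _ hU₀.1]
      _ ≤ ‖U - U₀‖ + n * ‖U - U₀‖ := by linarith
      _ = (n + 1 : ℕ) * ‖U - U₀‖ := by push_cast; ring

lemma pow_mul_ct {d : ℕ} (U : Matrix (Fin d) (Fin d) ℂ) (h : U * Uᴴ = 1) (n : ℕ) :
    U ^ n * (U ^ n)ᴴ = 1 := by
  have := ct_pow_mul_pow Uᴴ (by rwa [Matrix.conjTranspose_conjTranspose]) n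
  simpa [Matrix.conjTranspose_pow, Matrix.conjTranspose_conjTranspose] using this

lemma matrix_bound {d : ℕ} (U₀ U O M : Matrix (Fin d) (Fin d) ℂ)
    (hU₀ : U₀ * U₀ᴴ = 1 ∧ U₀ᴴ * U₀ = 1) (hU : U * Uᴴ = 1 ∧ Uᴴ * U = 1)
    (hO : O.IsHermitian) (hM : M = U₀ᴴ * U - 1) (r : ℕ) :
    FF (U₀ ^ r * O * (U₀ᴴ) ^ r - U ^ r * O * (Uᴴ) ^ r) ≤ 2 * (r : ℝ) ^ 2 * FF O * FF M := by
  set P := U₀ ^ r with hP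
  set Q := U ^ r with hQ
  have hP1 : Pᴴ * P = 1 := ct_pow_mul_pow U₀ hU₀.2 r
  have hP2 : P * Pᴴ = 1 := pow_mul_ct U₀ hU₀.1 r
  have hQ1 : Qᴴ * Q = 1 := ct_pow_mul_pow U hU.2 r
  have hQ2 : Q * Qᴴ = 1 := pow_mul_ct U hU.1 r
  set W := Pᴴ * Q with hW
  have hWW : W * Wᴴ = 1 := by
    rw [hW, Matrix.conjTranspose_mul, Matrix.conjTranspose_conjTranspose,
      show Pᴴ * Q * (Qᴴ * P) = Pᴴ * (Q * Qᴴ) * P by noncomm_ring, hQ2, Matrix.mul_one, hP1]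
  have hA : U₀ ^ r * O * (U₀ᴴ) ^ r - U ^ r * O * (Uᴴ) ^ r
      = P * ((O * W - W * O) * Wᴴ) * Pᴴ := by
    rw [← Matrix.conjTranspose_pow, ← Matrix.conjTranspose_pow, ← hP, ← hQ]
    have : P * ((O * W - W * O) * Wᴴ) * Pᴴ
        = P * O * (W * Wᴴ) * Pᴴ - (P * W) * O * (Wᴴ * Pᴴ) := by noncomm_ring
    rw [this, hWW, Matrix.mul_one]
    have hPW : P * W = Q := by rw [hW, ← Matrix.mul_assoc, hP2, Matrix.one_mul]
    rw [hPW, show Wᴴ * Pᴴ = (P * W)ᴴ from (Matrix.conjTranspose_mul P W).symm, hPW]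
  have hWW' : Wᴴ * W = 1 := by
    rw [hW, Matrix.conjTranspose_mul, Matrix.conjTranspose_conjTranspose,
      show Qᴴ * P * (Pᴴ * Q) = Qᴴ * (P * Pᴴ) * Q by noncomm_ring, hP2, Matrix.mul_one, hQ1]
  rw [hA, Matrix.mul_assoc, FF_mul_unitary_left _ _ hP1,
    FF_mul_unitary_right _ _ (by rwa [Matrix.conjTranspose_conjTranspose]),
    FF_mul_unitary_right _ _ (by rwa [Matrix.conjTranspose_conjTranspose])]
  have hsplit : O * W - W * O = O * (W - 1) - (W - 1) * O := by noncomm_ring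
  rw [hsplit]
  have hbw := bw_hermitian O (W - 1) hO
  have hWM : FF (W - 1) ≤ (r : ℝ) ^ 2 * FF M := by
    have h1 : W - 1 = Pᴴ * (Q - P) := by
      rw [hW, Matrix.mul_sub, hP1]
    have h2 : ‖W - 1‖ = ‖Q - P‖ := by
      rw [h1, norm_mul_unitary_left _ _ (by rwa [Matrix.conjTranspose_conjTranspose])]
    have h3 : ‖Q - P‖ ≤ (r : ℝ) * ‖U - U₀‖ := pow_sub_pow_norm_le U U₀ hU hU₀ r
    have h4 : ‖U - U₀‖ = ‖M‖ := by
      have : U - U₀ = U₀ * M := by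
        rw [hM, Matrix.mul_sub, Matrix.mul_one, ← Matrix.mul_assoc, hU₀.1, Matrix.one_mul]
      rw [this, norm_mul_unitary_left _ _ hU₀.2]
    have h5 : ‖W - 1‖ ≤ (r : ℝ) * ‖M‖ := by rw [h2, ← h4]; exact h3
    have h6 : ‖W - 1‖ ^ 2 ≤ ((r : ℝ) * ‖M‖) ^ 2 := by
      have := norm_nonneg (W - 1)
      nlinarith [norm_nonneg M, Nat.cast_nonneg (α := ℝ) r]
    rw [FF_eq_sq_norm, FF_eq_sq_norm]
    calc ‖W - 1‖ ^ 2 ≤ ((r:ℝ) * ‖M‖) ^ 2 := h6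
      _ = (r:ℝ)^2 * ‖M‖^2 := by ring
  calc FF (O * (W - 1) - (W - 1) * O) ≤ 2 * FF O * FF (W - 1) := hbw
    _ ≤ 2 * FF O * ((r:ℝ)^2 * FF M) := by
        have := FF_nonneg O
        nlinarith [FF_nonneg (W-1)]
    _ = 2 * (r:ℝ)^2 * FF O * FF M := by ring



section integrals
variable {d : ℕ} [MeasurableSpace (EuclideanSpace ℂ (Fin d))]
    [BorelSpace (EuclideanSpace ℂ (Fin d))]
    (μ : Measure (EuclideanSpace ℂ (Fin d))) [IsProbabilityMeasure μ]

lemma coord_cont (i : Fin d) : Continuous (fun ψ : EuclideanSpace ℂ (Fin d) => ψ i) :=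
  (continuous_apply i).comp (EuclideanSpace.equiv (Fin d) ℂ).continuous

lemma coord_bound {ψ : EuclideanSpace ℂ (Fin d)} (h : ‖ψ‖ = 1) (i : Fin d) : ‖ψ i‖ ≤ 1 := by
  rw [← h, EuclideanSpace.norm_eq]
  have h1 : ‖ψ i‖ ^ 2 ≤ ∑ j, ‖ψ j‖ ^ 2 :=
    Finset.single_le_sum (f := fun j => ‖ψ j‖ ^ 2) (fun j _ => sq_nonneg _) (Finset.mem_univ i)
  calc ‖ψ i‖ = Real.sqrt (‖ψ i‖ ^ 2) := by rw [Real.sqrt_sq (norm_nonneg _)]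
    _ ≤ Real.sqrt (∑ j, ‖ψ j‖ ^ 2) := Real.sqrt_le_sqrt h1

lemma cont4 (i j k l : Fin d) : Continuous (fun ψ : EuclideanSpace ℂ (Fin d) =>
    ψ i * (starRingEnd ℂ) (ψ j) * ψ k * (starRingEnd ℂ) (ψ l)) := by
  have c := coord_cont (d := d)
  exact (((c i).mul ((c j).star)).mul (c k)).mul ((c l).star)

lemma cont2 (i j : Fin d) : Continuous (fun ψ : EuclideanSpace ℂ (Fin d) =>
    ψ i * (starRingEnd ℂ) (ψ j)) := by
  have c := coord_cont (d := d)
  exact (c i).mul ((c j).star)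

lemma integrable_m4 (hunit : ∀ᵐ ψ ∂μ, ‖ψ‖ = 1) (i j k l : Fin d) :
    Integrable (fun ψ : EuclideanSpace ℂ (Fin d) =>
      ψ i * (starRingEnd ℂ) (ψ j) * ψ k * (starRingEnd ℂ) (ψ l)) μ := by
  refine (integrable_const (1:ℝ)).mono' ?_ ?_
  · exact (cont4 i j k l).aestronglyMeasurable
  · filter_upwards [hunit] with ψ h
    have := coord_bound h
    calc ‖ψ i * (starRingEnd ℂ) (ψ j) * ψ k * (starRingEnd ℂ) (ψ l)‖
        = ‖ψ i‖ * ‖ψ j‖ * ‖ψ k‖ * ‖ψ l‖ := by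
          simp [norm_mul]
      _ ≤ 1 * 1 * 1 * 1 := by
          gcongr <;> [exact this i; exact this j; exact this k; exact this l]
      _ = 1 := by norm_num

lemma integrable_m2 (hunit : ∀ᵐ ψ ∂μ, ‖ψ‖ = 1) (i j : Fin d) :
    Integrable (fun ψ : EuclideanSpace ℂ (Fin d) => ψ i * (starRingEnd ℂ) (ψ j)) μ := by
  refine (integrable_const (1:ℝ)).mono' ?_ ?_
  · exact (cont2 i j).aestronglyMeasurable
  · filter_upwards [hunit] with ψ h
    have := coord_bound h
    calc ‖ψ i * (starRingEnd ℂ) (ψ j)‖ = ‖ψ i‖ * ‖ψ j‖ := by simp [norm_mul]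
      _ ≤ 1 * 1 := by gcongr <;> [exact this i; exact this j]
      _ = 1 := by norm_num

lemma int_m2 (hunit : ∀ᵐ ψ ∂μ, ‖ψ‖ = 1)
    (hdesign : ∀ i j k l, (∫ ψ,
        ψ i * (starRingEnd ℂ) (ψ j) * ψ k * (starRingEnd ℂ) (ψ l) ∂μ)
      = ((if i = j then 1 else 0) * (if k = l then 1 else 0)
        + (if i = l then 1 else 0) * (if k = j then 1 else 0)) / (d * (d + 1)))
    (hd : 1 ≤ d) (i j : Fin d) :
    (∫ ψ, ψ i * (starRingEnd ℂ) (ψ j) ∂μ) = (if i = j then 1 else 0) / d := by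
  have step1 : (∫ ψ, ψ i * (starRingEnd ℂ) (ψ j) ∂μ)
      = ∫ ψ, ∑ k, ψ i * (starRingEnd ℂ) (ψ j) * ψ k * (starRingEnd ℂ) (ψ k) ∂μ := by
    refine integral_congr_ae ?_
    filter_upwards [hunit] with ψ h
    have hsum : ∑ k, ψ k * (starRingEnd ℂ) (ψ k) = 1 := by
      have hn : ∑ k, ‖ψ k‖ ^ 2 = 1 := by
        rw [EuclideanSpace.norm_eq] at h
        exact Real.sqrt_eq_one.mp h
      calc ∑ k, ψ k * (starRingEnd ℂ) (ψ k) = ∑ k, ((‖ψ k‖ ^ 2 : ℝ) : ℂ) := by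
            refine Finset.sum_congr rfl fun k _ => ?_
            rw [Complex.mul_conj]
            norm_cast
            rw [Complex.normSq_eq_norm_sq]
        _ = ((∑ k, ‖ψ k‖ ^ 2 : ℝ) : ℂ) := by push_cast; ring
        _ = 1 := by rw [hn]; norm_num
    calc ψ i * (starRingEnd ℂ) (ψ j)
        = ψ i * (starRingEnd ℂ) (ψ j) * ∑ k, ψ k * (starRingEnd ℂ) (ψ k) := by
          rw [hsum, mul_one]
      _ = ∑ k, ψ i * (starRingEnd ℂ) (ψ j) * ψ k * (starRingEnd ℂ) (ψ k) := by
          rw [Finset.mul_sum]; refine Finset.sum_congr rfl fun k _ => by ring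
  rw [step1, integral_finset_sum _ (fun k _ => integrable_m4 μ hunit i j k k)]
  have : ∀ k, (∫ ψ, ψ i * (starRingEnd ℂ) (ψ j) * ψ k * (starRingEnd ℂ) (ψ k) ∂μ)
      = ((if i = j then 1 else 0) * 1 + (if i = k then 1 else 0) * (if k = j then 1 else 0))
        / (d * (d + 1)) := by
    intro k; rw [hdesign i j k k]; simp
  rw [Finset.sum_congr rfl fun k _ => this k]
  have hd0 : (d : ℂ) ≠ 0 := Nat.cast_ne_zero.mpr (by omega)
  have hd1 : (d : ℂ) + 1 ≠ 0 := by
    have : ((d + 1 : ℕ) : ℂ) ≠ 0 := Nat.cast_ne_zero.mpr (by omega)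
    push_cast at this
    exact this
  rw [← Finset.sum_div]
  have hnum : ∑ k, ((if i = j then 1 else 0) * 1
      + (if i = k then 1 else 0) * (if k = j then (1:ℂ) else 0))
      = (if i = j then 1 else 0) * (d + 1) := by
    simp only [Finset.sum_add_distrib]
    have e1 : ∑ _k : Fin d, (if i = j then (1:ℂ) else 0) * 1 = (if i = j then 1 else 0) * d := by
      rw [Finset.sum_const]
      simp [Finset.card_univ, mul_comm]
    have e2 : ∑ k, (if i = k then (1:ℂ) else 0) * (if k = j then 1 else 0)
        = if i = j then 1 else 0 := by
      simp [Finset.sum_ite_eq]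
    rw [e1, e2]; ring
  rw [hnum]
  rcases eq_or_ne i j with hij | hij
  · simp only [hij, if_pos rfl]
    field_simp
  · simp [hij]
lemma integrable_qform (hunit : ∀ᵐ ψ ∂μ, ‖ψ‖ = 1) (A : Matrix (Fin d) (Fin d) ℂ) :
    Integrable (fun ψ => qform A ψ) μ := by
  have : ∀ ψ : EuclideanSpace ℂ (Fin d), qform A ψ
      = ∑ i, ∑ j, A i j * (ψ j * (starRingEnd ℂ) (ψ i)) := by
    intro ψ
    refine Finset.sum_congr rfl fun i _ => Finset.sum_congr rfl fun j _ => by ring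
  simp only [this]
  refine integrable_finset_sum _ fun i _ => integrable_finset_sum _ fun j _ => ?_
  exact (integrable_m2 μ hunit j i).const_mul (A i j)

lemma int_qform (hunit : ∀ᵐ ψ ∂μ, ‖ψ‖ = 1)
    (hdesign : ∀ i j k l, (∫ ψ,
        ψ i * (starRingEnd ℂ) (ψ j) * ψ k * (starRingEnd ℂ) (ψ l) ∂μ)
      = ((if i = j then 1 else 0) * (if k = l then 1 else 0)
        + (if i = l then 1 else 0) * (if k = j then 1 else 0)) / (d * (d + 1)))
    (hd : 1 ≤ d) (A : Matrix (Fin d) (Fin d) ℂ) :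
    (∫ ψ, qform A ψ ∂μ) = A.trace / d := by
  have hq : ∀ ψ : EuclideanSpace ℂ (Fin d), qform A ψ
      = ∑ i, ∑ j, A i j * (ψ j * (starRingEnd ℂ) (ψ i)) := by
    intro ψ
    refine Finset.sum_congr rfl fun i _ => Finset.sum_congr rfl fun j _ => by ring
  simp only [hq]
  rw [integral_finset_sum _ fun i _ => integrable_finset_sum _ fun j _ =>
    (integrable_m2 μ hunit j i).const_mul (A i j)]
  have : ∀ i, (∫ ψ, ∑ j, A i j * (ψ j * (starRingEnd ℂ) (ψ i)) ∂μ)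
      = ∑ j, A i j * ((if j = i then 1 else 0) / d) := by
    intro i
    rw [integral_finset_sum _ fun j _ => (integrable_m2 μ hunit j i).const_mul (A i j)]
    refine Finset.sum_congr rfl fun j _ => ?_
    rw [integral_const_mul, int_m2 μ hunit hdesign hd j i]
  rw [Finset.sum_congr rfl fun i _ => this i]
  rw [Matrix.trace, Finset.sum_div]
  refine Finset.sum_congr rfl fun i _ => ?_
  rw [Finset.sum_eq_single i]
  · simp [div_eq_mul_inv]
  · intro b _ hb; simp [hb]
  · simp

lemma int_qform_sq (hunit : ∀ᵐ ψ ∂μ, ‖ψ‖ = 1)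
    (hdesign : ∀ i j k l, (∫ ψ,
        ψ i * (starRingEnd ℂ) (ψ j) * ψ k * (starRingEnd ℂ) (ψ l) ∂μ)
      = ((if i = j then 1 else 0) * (if k = l then 1 else 0)
        + (if i = l then 1 else 0) * (if k = j then 1 else 0)) / (d * (d + 1)))
    (A : Matrix (Fin d) (Fin d) ℂ) :
    (∫ ψ, (qform A ψ) ^ 2 ∂μ) = (A.trace ^ 2 + (A * A).trace) / (d * (d + 1)) := by
  have hq : ∀ ψ : EuclideanSpace ℂ (Fin d), (qform A ψ) ^ 2
      = ∑ i, ∑ k, ∑ j, ∑ l, (A i j * A k l)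
          * (ψ j * (starRingEnd ℂ) (ψ i) * ψ l * (starRingEnd ℂ) (ψ k)) := by
    intro ψ
    rw [sq, qform, Finset.sum_mul_sum]
    refine Finset.sum_congr rfl fun i _ => Finset.sum_congr rfl fun k _ => ?_
    rw [Finset.sum_mul_sum]
    refine Finset.sum_congr rfl fun j _ => Finset.sum_congr rfl fun l _ => by ring
  simp only [hq]
  rw [integral_finset_sum _ fun i _ => integrable_finset_sum _ fun k _ =>
    integrable_finset_sum _ fun j _ => integrable_finset_sum _ fun l _ =>
      (integrable_m4 μ hunit j i l k).const_mul _]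
  have step : ∀ i, (∫ ψ, ∑ k, ∑ j, ∑ l, (A i j * A k l)
          * (ψ j * (starRingEnd ℂ) (ψ i) * ψ l * (starRingEnd ℂ) (ψ k)) ∂μ)
      = ∑ k, ∑ j, ∑ l, (A i j * A k l)
          * (((if j = i then 1 else 0) * (if l = k then 1 else 0)
            + (if j = k then 1 else 0) * (if l = i then 1 else 0)) / (d * (d + 1))) := by
    intro i
    rw [integral_finset_sum _ fun k _ => integrable_finset_sum _ fun j _ =>
      integrable_finset_sum _ fun l _ => (integrable_m4 μ hunit j i l k).const_mul _]
    refine Finset.sum_congr rfl fun k _ => ?_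
    rw [integral_finset_sum _ fun j _ => integrable_finset_sum _ fun l _ =>
      (integrable_m4 μ hunit j i l k).const_mul _]
    refine Finset.sum_congr rfl fun j _ => ?_
    rw [integral_finset_sum _ fun l _ => (integrable_m4 μ hunit j i l k).const_mul _]
    refine Finset.sum_congr rfl fun l _ => ?_
    rw [integral_const_mul, hdesign j i l k]
  rw [Finset.sum_congr rfl fun i _ => step i]
  have expand : ∀ i k j l : Fin d, (A i j * A k l)
          * (((if j = i then 1 else 0) * (if l = k then 1 else 0)
            + (if j = k then 1 else 0) * (if l = i then 1 else 0)) / ((d : ℂ) * (d + 1)))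
      = (A i j * A k l * ((if j = i then 1 else 0) * (if l = k then 1 else 0))
        + A i j * A k l * ((if j = k then 1 else 0) * (if l = i then 1 else 0)))
          / ((d : ℂ) * (d + 1)) := by
    intro i k j l; ring
  simp only [expand]
  simp only [← Finset.sum_div]
  congr 1
  have inner : ∀ i k : Fin d, (∑ j, ∑ l,
      (A i j * A k l * ((if j = i then 1 else 0) * (if l = k then (1:ℂ) else 0))
        + A i j * A k l * ((if j = k then 1 else 0) * (if l = i then 1 else 0))))
      = A i i * A k k + A i k * A k i := by
    intro i k
    simp [mul_ite, ite_mul, mul_one, mul_zero, zero_mul, Finset.sum_ite_eq',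
      Finset.sum_add_distrib]
  rw [Finset.sum_congr rfl fun i _ => Finset.sum_congr rfl fun k _ => inner i k]
  simp only [Finset.sum_add_distrib]
  congr 1
  · rw [Matrix.trace, sq, Finset.sum_mul_sum]
    rfl
lemma integrable_qform_sq (hunit : ∀ᵐ ψ ∂μ, ‖ψ‖ = 1) (A : Matrix (Fin d) (Fin d) ℂ) :
    Integrable (fun ψ => (qform A ψ) ^ 2) μ := by
  have hq : ∀ ψ : EuclideanSpace ℂ (Fin d), (qform A ψ) ^ 2
      = ∑ i, ∑ k, ∑ j, ∑ l, (A i j * A k l)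
          * (ψ j * (starRingEnd ℂ) (ψ i) * ψ l * (starRingEnd ℂ) (ψ k)) := by
    intro ψ
    rw [sq, qform, Finset.sum_mul_sum]
    refine Finset.sum_congr rfl fun i _ => Finset.sum_congr rfl fun k _ => ?_
    rw [Finset.sum_mul_sum]
    refine Finset.sum_congr rfl fun j _ => Finset.sum_congr rfl fun l _ => by ring
  simp only [hq]
  exact integrable_finset_sum _ fun i _ => integrable_finset_sum _ fun k _ =>
    integrable_finset_sum _ fun j _ => integrable_finset_sum _ fun l _ =>
      (integrable_m4 μ hunit j i l k).const_mul _

end integrals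

lemma qform_sub {d : ℕ} (X Y : Matrix (Fin d) (Fin d) ℂ) (ψ : EuclideanSpace ℂ (Fin d)) :
    qform (X - Y) ψ = qform X ψ - qform Y ψ := by
  rw [qform, qform, qform, ← Finset.sum_sub_distrib]
  refine Finset.sum_congr rfl fun i _ => ?_
  rw [← Finset.sum_sub_distrib]
  refine Finset.sum_congr rfl fun j _ => ?_
  rw [Matrix.sub_apply]
  ring

lemma qform_im_zero {d : ℕ} (A : Matrix (Fin d) (Fin d) ℂ) (hA : Aᴴ = A)
    (ψ : EuclideanSpace ℂ (Fin d)) : (qform A ψ).im = 0 := by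
  rw [← Complex.conj_eq_iff_im]
  calc (starRingEnd ℂ) (qform A ψ)
      = ∑ i, ∑ j, (starRingEnd ℂ) (ψ j) * A j i * ψ i := by
        rw [qform, map_sum]
        refine Finset.sum_congr rfl fun i _ => ?_
        rw [map_sum]
        refine Finset.sum_congr rfl fun j _ => ?_
        have hconj : (starRingEnd ℂ) (A i j) = A j i := by
          have h2 : Aᴴ j i = A j i := by rw [hA]
          rw [← h2, Matrix.conjTranspose_apply]
          rfl
        rw [_root_.map_mul, _root_.map_mul, Complex.conj_conj, hconj]
        ring
    _ = qform A ψ := by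
        rw [qform, Finset.sum_comm]

/-- Variance bound: for unitaries `U₀, U`, `M = U₀ᴴ U - 1`, Hermitian `O`, `r ≥ 1`,
and a 2-design measure `μ₂` on unit vectors, the variance of
`f(ψ) = ⟨ψ|U₀^r O (U₀ᴴ)^r|ψ⟩ - ⟨ψ|U^r O (Uᴴ)^r|ψ⟩` under `μ₂` is at most
`2 r² ‖O‖₂² ‖M‖₂² / (d(d+1))`. -/
theorem stmt_15 {d : ℕ} [MeasurableSpace (EuclideanSpace ℂ (Fin d))]
    [BorelSpace (EuclideanSpace ℂ (Fin d))]
    (μ : Measure (EuclideanSpace ℂ (Fin d)))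
    [IsProbabilityMeasure μ] (hunit : ∀ᵐ ψ ∂μ, ‖ψ‖ = 1)
    (hdesign : ∀ i j k l, (∫ ψ,
        ψ i * (starRingEnd ℂ) (ψ j) * ψ k * (starRingEnd ℂ) (ψ l) ∂μ)
      = ((if i = j then 1 else 0) * (if k = l then 1 else 0)
        + (if i = l then 1 else 0) * (if k = j then 1 else 0)) / (d * (d + 1)))
    (U₀ U O : Matrix (Fin d) (Fin d) ℂ)
    (hU₀ : U₀ * U₀ᴴ = 1 ∧ U₀ᴴ * U₀ = 1) (hU : U * Uᴴ = 1 ∧ Uᴴ * U = 1)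
    (hO : O.IsHermitian) (r : ℕ) (hr : 1 ≤ r)
    (M : Matrix (Fin d) (Fin d) ℂ) (hM : M = U₀ᴴ * U - 1)
    (f : EuclideanSpace ℂ (Fin d) → ℝ)
    (hf : ∀ ψ, f ψ = (qform (U₀ ^ r * O * (U₀ᴴ) ^ r) ψ).re
        - (qform (U ^ r * O * (Uᴴ) ^ r) ψ).re) :
    (∫ ψ, f ψ ^ 2 ∂μ) - (∫ ψ, f ψ ∂μ) ^ 2
      ≤ 2 * r ^ 2 * schatten2 O ^ 2 * schatten2 M ^ 2 / (d * (d + 1)) := by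
  rcases Nat.eq_zero_or_pos d with hd0 | hd
  · exfalso
    subst hd0
    have hne : μ ≠ 0 := IsProbabilityMeasure.ne_zero μ
    have : (ae μ).NeBot := ae_neBot.mpr hne
    obtain ⟨ψ, hψ⟩ := hunit.exists
    have hz : ψ = 0 := Subsingleton.elim _ _
    rw [hz, norm_zero] at hψ
    exact zero_ne_one hψ
  set A := U₀ ^ r * O * (U₀ᴴ) ^ r - U ^ r * O * (Uᴴ) ^ r with hA
  have hOeq : Oᴴ = O := hO
  have hAH : Aᴴ = A := by
    rw [hA, Matrix.conjTranspose_sub, Matrix.conjTranspose_mul, Matrix.conjTranspose_mul,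
      Matrix.conjTranspose_mul, Matrix.conjTranspose_mul]
    simp only [Matrix.conjTranspose_pow, Matrix.conjTranspose_conjTranspose, hOeq]
    rw [Matrix.mul_assoc, Matrix.mul_assoc]
  have hfq : ∀ ψ, f ψ = (qform A ψ).re := by
    intro ψ
    rw [hf ψ, hA, qform_sub, Complex.sub_re]
  have htr : A.trace = 0 := by
    rw [hA, Matrix.trace_sub]
    have t1 : (U₀ ^ r * O * (U₀ᴴ) ^ r).trace = O.trace := by
      rw [← Matrix.conjTranspose_pow, Matrix.trace_mul_cycle, ct_pow_mul_pow U₀ hU₀.2 r,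
        Matrix.one_mul]
    have t2 : (U ^ r * O * (Uᴴ) ^ r).trace = O.trace := by
      rw [← Matrix.conjTranspose_pow, Matrix.trace_mul_cycle, ct_pow_mul_pow U hU.2 r,
        Matrix.one_mul]
    rw [t1, t2, sub_self]
  have hint1 : (∫ ψ, f ψ ∂μ) = 0 := by
    simp only [hfq, ← RCLike.re_to_complex]
    rw [integral_re (integrable_qform μ hunit A),
      int_qform μ hunit hdesign hd A, htr]
    simp
  have hint2 : (∫ ψ, f ψ ^ 2 ∂μ) = FF A / (d * (d + 1)) := by
    have hsq : ∀ ψ, f ψ ^ 2 = ((qform A ψ) ^ 2).re := by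
      intro ψ
      rw [hfq, sq, sq, Complex.mul_re, qform_im_zero A hAH ψ]
      ring
    simp only [hsq, ← RCLike.re_to_complex]
    rw [integral_re (integrable_qform_sq μ hunit A),
      int_qform_sq μ hunit hdesign A, htr]
    simp only [RCLike.re_to_complex]
    have hAA : (A * A).trace = (A * Aᴴ).trace := by rw [hAH]
    rw [show ((0:ℂ) ^ 2 + (A * A).trace) = (A * A).trace by ring, hAA]
    rw [show ((d:ℂ) * ((d:ℂ) + 1)) = (((d * (d + 1) : ℝ)) : ℂ) by push_cast; ring,
      Complex.div_ofReal_re, trace_re_eq_FF]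
  rw [hint1, hint2, schatten2_sq, schatten2_sq]
  have hb := matrix_bound U₀ U O M hU₀ hU hO hM r
  have hden : (0:ℝ) < (d : ℝ) * ((d : ℝ) + 1) := by positivity
  have hq2 : FF A / ((d:ℝ) * ((d:ℝ) + 1))
      ≤ 2 * (r:ℝ) ^ 2 * FF O * FF M / ((d:ℝ) * ((d:ℝ) + 1)) := by gcongr
  have h0 : (0:ℝ) ^ 2 = 0 := by norm_num
  rw [h0, sub_zero]
  convert hq2 using 2
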